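/- Let α > 1 be non-integer with n = ⌈α⌉, let a₁, a₂, b₁, b₂ ∈ ℝ with b₁b₂ ≠ 0, set s̃₁ = −a₁/b₁ and s̃₂ = −a₂/b₂, and assume that k/α + s̃_i is not a positive integer for every k = 1, …, n and i = 1, 2. For constants c_{k,1}, c_{k,2} ∈ ℝ define φ(z) = Σ_{k=1}^n c_{k,1} z^{α−k} ₃Ψ₁[4b₁b₂ z^{2α} | (1 − k/(2α) − s̃₁/2, 1), (1/2 − k/(2α) − s̃₂/2, 1), (1,1); (1 + α − k, 2α)] + 2b₁ Σ_{k=1}^n c_{k,2} z^{2α−k} ₃Ψ₁[4b₁b₂ z^{2α} | (3/2 − k/(2α) − s̃₁/2, 1), (1 − k/(2α) − s̃₂/2, 1), (1,1); (1 + 2α − k, 2α)] and ψ(z) = 2b₂ Σ_{k=1}^n c_{k,1} z^{2α−k} ₃Ψ₁[4b₁b₂ z^{2α} | (1 − k/(2α) − s̃₁/2, 1), (3/2 − k/(2α) − s̃₂/2, 1), (1,1); (1 + 2α − k, 2α)] + Σ_{k=1}^n c_{k,2} z^{α−k} ₃Ψ₁[4b₁b₂ z^{2α} | (1/2 − k/(2α)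 − s̃₁/2, 1), (1 − k/(2α) − s̃₂/2, 1), (1,1); (1 + α − k, 2α)]. Then (d^α/dz^α)φ(z) = a₁ ψ(z) + (b₁/α) z ψ′(z) and (d^α/dz^α)ψ(z) = a₂ φ(z) + (b₂/α) z φ′(z) for all z > 0. -/

import Mathlib

open Real MeasureTheory

/-- Riemann–Liouville fractional derivative of order `α` (with `n = ⌈α⌉₊`, so that
`n - 1 < α < n` when `α > 0` is not an integer). -/
noncomputable def rlDeriv (α : ℝ) (f : ℝ → ℝ) (z : ℝ) : ℝ :=
  (1 / Real.Gamma ((⌈α⌉₊ : ℝ) - α)) *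
    iteratedDeriv ⌈α⌉₊
      (fun x => ∫ s in (0:ℝ)..x, (x - s) ^ ((⌈α⌉₊ : ℝ) - α - 1) * f s) z

/-- Riemann–Liouville derivative of a complex-valued function,
applied to its real and imaginary parts. -/
noncomputable def rlDerivC (α : ℝ) (f : ℝ → ℂ) (z : ℝ) : ℂ :=
  (rlDeriv α (fun x => (f x).re) z : ℂ) +
    (rlDeriv α (fun x => (f x).im) z : ℂ) * Complex.I

/-- The Mittag-Leffler function `E_{ρ,β}(x)`.  (Recall that in Mathlib the real
Gamma function vanishes at nonpositive integers, so `1/Γ` is `0` there.) -/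
noncomputable def mittagLeffler (ρ β x : ℝ) : ℝ :=
  ∑' i : ℕ, x ^ i / Real.Gamma (ρ * i + β)

/-- The generalized Wright function `ₚΨ_q[x | (A_i, a_i); (B_j, b_j)]`. -/
noncomputable def genWright {p q : ℕ} (A a : Fin p → ℝ) (B b : Fin q → ℝ) (x : ℝ) : ℝ :=
  ∑' k : ℕ, ((∏ i, Real.Gamma (A i + a i * k)) / (∏ j, Real.Gamma (B j + b j * k)))
      * x ^ k / (Nat.factorial k : ℝ)

/-- The Wright function `Ψ(x; ρ, β)`. -/
noncomputable def wrightFn (x ρ β : ℝ) : ℝ :=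
  ∑' i : ℕ, x ^ i / ((Nat.factorial i : ℝ) * Real.Gamma (ρ * i + β))

/-- The Fox H-function `H^{m,0}_{p,q}[w | (A_i,a_i); (B_j,b_j)]`, given by its
Mellin–Barnes integral along the vertical line with real abscissa `γ`. -/
noncomputable def foxH {p q : ℕ} (m : ℕ) (A a : Fin p → ℝ) (B b : Fin q → ℝ)
    (γ : ℝ) (w : ℝ) : ℂ :=
  ((1 / (2 * Real.pi) : ℝ) : ℂ) * ∫ t : ℝ,
    (∏ j : Fin q, if (j : ℕ) < m then
        Complex.Gamma ((B j : ℂ) - (b j : ℂ) * ((γ : ℂ) + (t : ℂ) * Complex.I)) else 1) /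
      ((∏ i : Fin p, Complex.Gamma ((A i : ℂ) - (a i : ℂ) * ((γ : ℂ) + (t : ℂ) * Complex.I))) *
        (∏ j : Fin q, if (j : ℕ) < m then 1 else
          Complex.Gamma (1 - (B j : ℂ) + (b j : ℂ) * ((γ : ℂ) + (t : ℂ) * Complex.I)))) *
    (w : ℂ) ^ ((γ : ℂ) + (t : ℂ) * Complex.I)

/-- `x` is not a negative integer. -/
def notNegInt (x : ℝ) : Prop := ∀ j : ℤ, j < 0 → x ≠ (j : ℝ)

/-- `x` is not a nonpositive integer. -/
def notNonposInt (x : ℝ) : Prop := ∀ j : ℤ, j ≤ 0 → x ≠ (j : ℝ)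

/-! Every term of `φ` and `ψ` is `x^σ` times a power series in `x^(2α)` whose coefficients, the
`Γ`-ratios of a `₃Ψ₁` with `2α > 2`, decay superexponentially, so the series can be integrated and
differentiated termwise. Termwise, `D^α x^μ = Γ(μ + 1) / Γ(μ + 1 - α) x^(μ - α)` just replaces
the denominator parameter `B` of the `₃Ψ₁` by `B - α`. For `μ = α - k` the `m = 0` term dies at
the pole of `Γ` at `1 - k`; after the index shift both sides of each equation are series in the
same powers of `x`, whose coefficients agree by `Γ(s + 1) = s Γ(s)`. Exchanging the indices `1`
and `2` turns `ψ` into `φ`, so the second equation is the first one for the exchanged data. -/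

open Filter

lemma rpow_mul_Gamma_le_Gamma_add {y s : ℝ} (hy : 1 < y) (hs : 0 ≤ s) :
    (y - 1) ^ s * Gamma y ≤ Gamma (y + s) := by
  rcases hs.eq_or_lt with rfl | hs
  · simp
  have hy1 : 0 < y - 1 := by linarith
  have hΓ : Gamma y = (y - 1) * Gamma (y - 1) := by
    simpa using Real.Gamma_add_one hy1.ne'
  have hΓ₁ := Real.Gamma_pos_of_pos hy1
  -- log Γ is convex, so its slope on [y, y + s] dominates its slope log (y - 1) on [y - 1, y]
  have hslope := Real.convexOn_log_Gamma.slope_mono_adjacent (Set.mem_Ioi.2 hy1)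
    (Set.mem_Ioi.2 (by linarith : 0 < y + s)) (by linarith : y - 1 < y) (by linarith : y < y + s)
  simp only [Function.comp_apply, hΓ, Real.log_mul hy1.ne' hΓ₁.ne', sub_sub_cancel, div_one,
    add_sub_cancel_left, le_div_iff₀ hs] at hslope
  calc (y - 1) ^ s * Gamma y
      = Real.exp (Real.log (y - 1) * s + Real.log (Gamma y)) := by
        rw [Real.exp_add, Real.exp_log (Real.Gamma_pos_of_pos (by linarith)),
          Real.rpow_def_of_pos hy1]
    _ ≤ Real.exp (Real.log (Gamma (y + s))) := by
        gcongr
        rw [hΓ, Real.log_mul hy1.ne' hΓ₁.ne']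
        linarith
    _ = Gamma (y + s) := Real.exp_log (Real.Gamma_pos_of_pos (by linarith))

lemma abs_mul_add_le (e σ : ℝ) (m : ℕ) : |e * m + σ| ≤ (|e| + |σ|) * ((m : ℝ) + 1) := by
  calc |e * m + σ| ≤ |e| * m + |σ| := by
        simpa [abs_mul] using abs_add_le (e * m) σ
    _ ≤ (|e| + |σ|) * ((m : ℝ) + 1) := by nlinarith [abs_nonneg e, abs_nonneg σ]

lemma eventually_le_mul_add {e : ℝ} (he : 0 < e) (σ T : ℝ) :
    ∀ᶠ m : ℕ in atTop, T ≤ e * m + σ :=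
  (tendsto_atTop_add_const_right _ σ
    ((tendsto_natCast_atTop_atTop (R := ℝ)).const_mul_atTop he)).eventually_ge_atTop T

-- The weights `(m + 1)^N` make the class stable under termwise differentiation.
def EntireCoeffs (d : ℕ → ℝ) : Prop :=
  ∀ (N : ℕ) (x : ℝ), 0 ≤ x → Summable fun m : ℕ => |d m| * ((m : ℝ) + 1) ^ N * x ^ m

namespace EntireCoeffs

variable {d d' : ℕ → ℝ}

lemma of_eventually_le (h : EntireCoeffs d) (J : ℕ) (K : ℝ)
    (hle : ∀ᶠ m in atTop, |d' m| ≤ K * ((m : ℝ) + 1) ^ J * |d m|) : EntireCoeffs d' := by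
  intro N x hx
  refine Summable.of_norm_bounded_eventually_nat ((h (N + J) x hx).mul_left K) ?_
  filter_upwards [hle] with m hm
  rw [Real.norm_of_nonneg (by positivity), pow_add]
  calc |d' m| * ((m : ℝ) + 1) ^ N * x ^ m
      ≤ (K * ((m : ℝ) + 1) ^ J * |d m|) * ((m : ℝ) + 1) ^ N * x ^ m := by gcongr
    _ = _ := by ring

lemma of_eventually_ratio_le (h : ∀ ε > 0, ∀ᶠ m in atTop, |d (m + 1)| ≤ ε * |d m|) :
    EntireCoeffs d := by
  intro N x hx
  refine summable_of_ratio_norm_eventually_le (r := 1 / 2) (by norm_num) ?_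
  filter_upwards [h (1 / (2 * (2 ^ N * x + 1))) (by positivity)] with m hm
  have hε : 1 / (2 * (2 ^ N * x + 1)) * (2 ^ N * x) ≤ 1 / 2 := by
    rw [div_mul_eq_mul_div, one_mul, div_le_iff₀ (by positivity)]
    linarith
  have hweight : ((m + 1 : ℕ) + 1 : ℝ) ^ N ≤ 2 ^ N * ((m : ℝ) + 1) ^ N := by
    rw [← mul_pow]; push_cast; gcongr; linarith
  rw [Real.norm_of_nonneg (by positivity), Real.norm_of_nonneg (by positivity), pow_succ]
  calc |d (m + 1)| * ((m + 1 : ℕ) + 1 : ℝ) ^ N * (x ^ m * x)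
      ≤ (1 / (2 * (2 ^ N * x + 1)) * |d m|) * (2 ^ N * ((m : ℝ) + 1) ^ N) * (x ^ m * x) := by
        gcongr
    _ = (1 / (2 * (2 ^ N * x + 1)) * (2 ^ N * x)) * (|d m| * ((m : ℝ) + 1) ^ N * x ^ m) := by
        ring
    _ ≤ 1 / 2 * (|d m| * ((m : ℝ) + 1) ^ N * x ^ m) := by gcongr

lemma congr (h : EntireCoeffs d) (hdd' : ∀ m, d' m = d m) : EntireCoeffs d' := fun N x hx => by
  simpa only [hdd'] using h N x hx

lemma abs (h : EntireCoeffs d) : EntireCoeffs fun m => |d m| := fun N x hx => by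
  simpa only [abs_abs] using h N x hx

lemma const_mul (h : EntireCoeffs d) (a : ℝ) : EntireCoeffs fun m => a * d m :=
  h.of_eventually_le 0 |a| (.of_forall fun m => by simp [abs_mul])

lemma mul_affine (h : EntireCoeffs d) (e σ : ℝ) : EntireCoeffs fun m => d m * (e * m + σ) :=
  h.of_eventually_le 1 (|e| + |σ|) (.of_forall fun m => by
    rw [abs_mul, pow_one, mul_comm (|d m|)]
    gcongr
    exact abs_mul_add_le e σ m)

lemma mul_prod (h : EntireCoeffs d) (e σ : ℝ) (j : ℕ) :
    EntireCoeffs fun m => d m * ∏ l ∈ Finset.range j, (e * m + σ - l) := by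
  induction j with
  | zero => simpa using h
  | succ j ih =>
    refine (ih.mul_affine e (σ - j)).congr fun m => ?_
    rw [Finset.prod_range_succ]
    ring

lemma mul_Gamma_div (h : EntireCoeffs d) {e c : ℝ} (he : 0 < e) (hc : 0 ≤ c) (σ : ℝ) :
    EntireCoeffs fun m => d m * (Gamma (e * m + σ + 1) / Gamma (e * m + σ + c + 1)) := by
  refine h.of_eventually_le 0 1 ?_
  filter_upwards [eventually_le_mul_add he (σ + 1) 2] with m hm
  rw [← add_assoc] at hm
  have hratio : Gamma (e * m + σ + 1) / Gamma (e * m + σ + c + 1) ≤ 1 := by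
    rw [div_le_one (Real.Gamma_pos_of_pos (by linarith))]
    exact Real.Gamma_strictMonoOn_Ici.monotoneOn hm (by simp only [Set.mem_Ici]; linarith)
      (by linarith)
  rw [abs_mul, abs_of_nonneg (div_nonneg (Real.Gamma_pos_of_pos (by linarith)).le
    (Real.Gamma_pos_of_pos (by linarith)).le)]
  simpa using mul_le_mul_of_nonneg_left hratio (abs_nonneg (d m))

end EntireCoeffs

/-- The `m`-th coefficient of `₃Ψ₁[C t | (A₁, 1), (A₂, 1), (1, 1); (B, e)]` as a power series in
`t`; the factor `Γ(1 + m)` cancels `m!`. -/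
noncomputable def wrightCoeff (A₁ A₂ B e C : ℝ) (m : ℕ) : ℝ :=
  Gamma (A₁ + m) * Gamma (A₂ + m) / Gamma (B + e * m) * C ^ m

lemma wrightCoeff_succ (A₁ A₂ B e C : ℝ) (m : ℕ) :
    wrightCoeff A₁ A₂ B e C (m + 1) = C * wrightCoeff (A₁ + 1) (A₂ + 1) (B + e) e C m := by
  simp only [wrightCoeff, Nat.cast_succ, pow_succ]
  rw [show A₁ + (m + 1) = A₁ + 1 + m by ring, show A₂ + (m + 1) = A₂ + 1 + m by ring,
    show B + e * (m + 1) = B + e + e * m by ring]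
  ring

lemma wrightCoeff_add_one_left {A₁ : ℝ} {m : ℕ} (h : A₁ + m ≠ 0) (A₂ B e C : ℝ) :
    wrightCoeff (A₁ + 1) A₂ B e C m = (A₁ + m) * wrightCoeff A₁ A₂ B e C m := by
  simp only [wrightCoeff]
  rw [show A₁ + 1 + m = A₁ + m + 1 by ring, Real.Gamma_add_one h]
  ring

lemma wrightCoeff_mul_Gamma_div (A₁ A₂ e C α : ℝ) {B σ : ℝ} (hB : B = σ + 1) {m : ℕ}
    (h : Gamma (e * m + σ + 1) ≠ 0) :
    wrightCoeff A₁ A₂ B e C m * (Gamma (e * m + σ + 1) / Gamma (e * m + σ + 1 - α)) =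
      wrightCoeff A₁ A₂ (B - α) e C m := by
  subst hB
  simp only [wrightCoeff]
  rw [show σ + 1 + e * m = e * m + σ + 1 by ring,
    show σ + 1 - α + e * m = e * m + σ + 1 - α by ring]
  simp only [div_eq_mul_inv]
  linear_combination Gamma (A₁ + m) * Gamma (A₂ + m) * C ^ m * (Gamma (e * m + σ + 1 - α))⁻¹ *
    mul_inv_cancel₀ h

lemma wrightCoeff_zero_of_Gamma_eq_zero {A₁ A₂ B e C : ℝ} (h : Gamma B = 0) :
    wrightCoeff A₁ A₂ B e C 0 = 0 := by
  simp [wrightCoeff, h]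

lemma abs_wrightCoeff_succ_le {A₁ A₂ B e C : ℝ} {m : ℕ} (he : 0 ≤ e) (hA₁ : 0 < A₁ + m)
    (hA₂ : 0 < A₂ + m) (hB : 2 < B + e * m) :
    |wrightCoeff A₁ A₂ B e C (m + 1)| ≤
      (A₁ + m) * (A₂ + m) * |C| / (B + e * m - 1) ^ e * |wrightCoeff A₁ A₂ B e C m| := by
  set g := B + e * m
  have hΓ := Real.Gamma_pos_of_pos (by linarith : 0 < g)
  have hΓa := Real.Gamma_pos_of_pos hA₁
  have hΓb := Real.Gamma_pos_of_pos hA₂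
  have hΓ' := Real.Gamma_pos_of_pos (by linarith : 0 < g + e)
  have hgrowth : (g - 1) ^ e * Gamma g ≤ Gamma (g + e) :=
    rpow_mul_Gamma_le_Gamma_add (by linarith) he
  rw [wrightCoeff_succ]
  simp only [wrightCoeff]
  rw [show A₁ + 1 + m = A₁ + m + 1 by ring, show A₂ + 1 + m = A₂ + m + 1 by ring,
    Real.Gamma_add_one hA₁.ne', Real.Gamma_add_one hA₂.ne', show B + e + e * m = g + e by ring,
    show B + e * m = g from rfl]
  simp only [abs_mul, abs_div, abs_pow, abs_of_pos hΓa, abs_of_pos hΓb, abs_of_pos hΓ,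
    abs_of_pos hΓ', abs_of_pos hA₁, abs_of_pos hA₂]
  have hratio : 1 / Gamma (g + e) ≤ 1 / ((g - 1) ^ e * Gamma g) :=
    one_div_le_one_div_of_le (mul_pos (Real.rpow_pos_of_pos (by linarith) _) hΓ) hgrowth
  calc |C| * ((A₁ + m) * Gamma (A₁ + m) * ((A₂ + m) * Gamma (A₂ + m)) / Gamma (g + e) * |C| ^ m)
      = (A₁ + m) * (A₂ + m) * |C| * (Gamma (A₁ + m) * Gamma (A₂ + m) * |C| ^ m) *
          (1 / Gamma (g + e)) := by ring
    _ ≤ (A₁ + m) * (A₂ + m) * |C| * (Gamma (A₁ + m) * Gamma (A₂ + m) * |C| ^ m) *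
          (1 / ((g - 1) ^ e * Gamma g)) := by gcongr
    _ = _ := by field_simp

-- Since `e > 2`, the ratio of consecutive coefficients decays like `m² / m^e`.
lemma entireCoeffs_wrightCoeff (A₁ A₂ B C : ℝ) {e : ℝ} (he : 2 < e) :
    EntireCoeffs (wrightCoeff A₁ A₂ B e C) := by
  refine EntireCoeffs.of_eventually_ratio_le fun ε hε => ?_
  have hg : Tendsto (fun m : ℕ => e * m + (B - 1)) atTop atTop :=
    tendsto_atTop_add_const_right _ _
      ((tendsto_natCast_atTop_atTop (R := ℝ)).const_mul_atTop (by linarith))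
  filter_upwards [eventually_le_mul_add one_pos A₁ 1, eventually_le_mul_add one_pos A₂ 1,
    hg.eventually_ge_atTop 2, eventually_le_mul_add (by linarith : 0 < e - 1) (B - 1 - A₁) 0,
    eventually_le_mul_add (by linarith : 0 < e - 1) (B - 1 - A₂) 0,
    ((tendsto_rpow_atTop (by linarith : 0 < e - 2)).comp hg).eventually_ge_atTop (|C| / ε)]
    with m h₁ h₂ hg2 hA₁ hA₂ hCε
  rw [one_mul] at h₁ h₂
  rw [Function.comp_apply, div_le_iff₀ hε] at hCε
  refine (abs_wrightCoeff_succ_le (by linarith) (by linarith) (by linarith) (by linarith)).trans ?_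
  gcongr
  have hsplit : (e * m + (B - 1)) ^ e = (e * m + (B - 1)) ^ 2 * (e * m + (B - 1)) ^ (e - 2) := by
    rw [← Real.rpow_natCast, ← Real.rpow_add (by linarith)]; norm_num
  rw [show B + e * m - 1 = e * m + (B - 1) by ring,
    div_le_iff₀ (Real.rpow_pos_of_pos (by linarith) _), hsplit]
  have : (A₁ + m) * (A₂ + m) ≤ (e * m + (B - 1)) ^ 2 := by nlinarith
  nlinarith [abs_nonneg C, Real.rpow_nonneg (by linarith : (0 : ℝ) ≤ e * m + (B - 1)) (e - 2)]

noncomputable def rpowSeries (d : ℕ → ℝ) (e σ x : ℝ) : ℝ :=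
  ∑' m : ℕ, d m * x ^ (e * m + σ)

lemma rpow_mul_add {x : ℝ} (hx : 0 < x) (e σ : ℝ) (m : ℕ) :
    x ^ (e * m + σ) = x ^ σ * (x ^ e) ^ m := by
  rw [Real.rpow_add hx, ← Real.rpow_natCast, ← Real.rpow_mul hx.le, mul_comm]

lemma rpow_mul_genWright (A₁ A₂ B e C β : ℝ) {x : ℝ} (hx : 0 < x) :
    x ^ β * genWright ![A₁, A₂, 1] ![1, 1, 1] ![B] ![e] (C * x ^ e) =
      rpowSeries (wrightCoeff A₁ A₂ B e C) e β x := by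
  rw [genWright, rpowSeries, ← tsum_mul_left]
  refine tsum_congr fun m => ?_
  have hfact : Gamma (1 + m) = m.factorial := by
    rw [add_comm]; exact_mod_cast Real.Gamma_nat_eq_factorial m
  have hfact0 : (m.factorial : ℝ) ≠ 0 := by positivity
  simp only [Fin.prod_univ_three, Fin.prod_univ_one, Matrix.cons_val_zero, Matrix.cons_val_one,
    Matrix.cons_val_two, Matrix.tail_cons, Matrix.head_cons, one_mul, hfact, wrightCoeff,
    rpow_mul_add hx, mul_pow]
  field_simp

namespace EntireCoeffs

variable {d : ℕ → ℝ}

lemma summable_rpowSeries (h : EntireCoeffs d) (e σ : ℝ) {x : ℝ} (hx : 0 < x) :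
    Summable fun m : ℕ => d m * x ^ (e * m + σ) := by
  refine Summable.of_norm_bounded ((h 0 (x ^ e) (by positivity)).mul_left (x ^ σ)) fun m => ?_
  rw [rpow_mul_add hx, Real.norm_eq_abs, abs_mul,
    abs_of_nonneg (by positivity : 0 ≤ x ^ σ * (x ^ e) ^ m)]
  simp only [pow_zero, mul_one]
  exact le_of_eq (by ring)

end EntireCoeffs

lemma rpowSeries_congr {d d' : ℕ → ℝ} {e σ σ' x : ℝ} (h : ∀ m, d m = d' m) (hσ : σ = σ') :
    rpowSeries d e σ x = rpowSeries d' e σ' x := by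
  simp only [rpowSeries, h, hσ]

lemma rpowSeries_const_mul (a : ℝ) (d : ℕ → ℝ) (e σ x : ℝ) :
    a * rpowSeries d e σ x = rpowSeries (fun m => a * d m) e σ x := by
  rw [rpowSeries, rpowSeries, ← tsum_mul_left]
  exact tsum_congr fun m => by ring

lemma rpowSeries_add {d d' : ℕ → ℝ} (h : EntireCoeffs d) (h' : EntireCoeffs d') (e σ : ℝ)
    {x : ℝ} (hx : 0 < x) :
    rpowSeries d e σ x + rpowSeries d' e σ x = rpowSeries (fun m => d m + d' m) e σ x := by
  rw [rpowSeries, rpowSeries, rpowSeries,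
    ← (h.summable_rpowSeries e σ hx).tsum_add (h'.summable_rpowSeries e σ hx)]
  exact tsum_congr fun m => by ring

lemma rpowSeries_eq_shift {d : ℕ → ℝ} (h : EntireCoeffs d) (hd : d 0 = 0) (e σ : ℝ) {x : ℝ}
    (hx : 0 < x) : rpowSeries d e σ x = rpowSeries (fun m => d (m + 1)) e (σ + e) x := by
  rw [rpowSeries, (h.summable_rpowSeries e σ hx).tsum_eq_zero_add, hd, zero_mul, zero_add]
  refine tsum_congr fun m => ?_
  push_cast
  ring_nf

lemma rpow_le_add_rpow {a b t : ℝ} (ha : 0 < a) (hat : a ≤ t) (htb : t ≤ b) (p : ℝ) :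
    t ^ p ≤ a ^ p + b ^ p := by
  rcases le_total 0 p with hp | hp
  · linarith [Real.rpow_le_rpow (by linarith) htb hp, Real.rpow_nonneg ha.le p]
  · linarith [Real.rpow_le_rpow_of_nonpos ha hat hp,
      Real.rpow_nonneg (ha.trans_le (hat.trans htb)).le p]

lemma hasDerivAt_rpowSeries {d : ℕ → ℝ} (h : EntireCoeffs d) {e : ℝ} (he : 0 < e) (σ : ℝ) {z : ℝ}
    (hz : 0 < z) :
    HasDerivAt (rpowSeries d e σ) (rpowSeries (fun m => d m * (e * m + σ)) e (σ - 1) z) z := by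
  set P := (z / 2) ^ (σ - 1) + (2 * z) ^ (σ - 1)
  set Q := (2 * z) ^ e
  have hbound : ∀ m (y : ℝ), y ∈ Set.Ioo (z / 2) (2 * z) →
      ‖d m * ((e * m + σ) * y ^ (e * m + σ - 1))‖ ≤
        (|e| + |σ|) * P * (|d m| * ((m : ℝ) + 1) ^ 1 * Q ^ m) := by
    rintro m y ⟨hy₁, hy₂⟩
    have hy : 0 < y := by linarith
    rw [show e * m + σ - 1 = e * m + (σ - 1) by ring, rpow_mul_add hy, Real.norm_eq_abs,
      abs_mul, abs_mul, abs_of_nonneg (by positivity : 0 ≤ y ^ (σ - 1) * (y ^ e) ^ m)]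
    calc |d m| * (|e * m + σ| * (y ^ (σ - 1) * (y ^ e) ^ m))
        ≤ |d m| * ((|e| + |σ|) * ((m : ℝ) + 1) * (P * Q ^ m)) := by
          gcongr
          · exact abs_mul_add_le e σ m
          · exact rpow_le_add_rpow (by linarith) hy₁.le hy₂.le _
          · exact Real.rpow_le_rpow hy.le hy₂.le he.le
      _ = (|e| + |σ|) * P * (|d m| * ((m : ℝ) + 1) ^ 1 * Q ^ m) := by ring
  have hz_mem : z ∈ Set.Ioo (z / 2) (2 * z) := ⟨by linarith, by linarith⟩
  have := hasDerivAt_tsum_of_isPreconnected ((h 1 Q (by positivity)).mul_left _) isOpen_Ioo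
    isPreconnected_Ioo (g := fun m y => d m * y ^ (e * m + σ))
    (fun m y hy => (Real.hasDerivAt_rpow_const (Or.inl (by linarith [hy.1]))).const_mul (d m))
    hbound hz_mem (h.summable_rpowSeries e σ hz) hz_mem
  have hval : rpowSeries (fun m => d m * (e * m + σ)) e (σ - 1) z =
      ∑' m : ℕ, d m * ((e * m + σ) * z ^ (e * m + σ - 1)) :=
    tsum_congr fun m => by rw [show e * m + σ - 1 = e * m + (σ - 1) by ring]; ring
  rw [hval]
  exact this

section FiniteSums

variable {ι : Type*} (S : Finset ι) {d : ι → ℕ → ℝ} {e : ℝ} (σ : ι → ℝ)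

lemma hasDerivAt_sum_rpowSeries (hd : ∀ i ∈ S, EntireCoeffs (d i)) (he : 0 < e) {z : ℝ}
    (hz : 0 < z) :
    HasDerivAt (fun x => ∑ i ∈ S, rpowSeries (d i) e (σ i) x)
      (∑ i ∈ S, rpowSeries (fun m => d i m * (e * m + σ i)) e (σ i - 1) z) z :=
  HasDerivAt.fun_sum fun i hi => hasDerivAt_rpowSeries (hd i hi) he (σ i) hz

lemma iteratedDeriv_sum_rpowSeries (hd : ∀ i ∈ S, EntireCoeffs (d i)) (he : 0 < e) (j : ℕ)
    {z : ℝ} (hz : 0 < z) :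
    iteratedDeriv j (fun x => ∑ i ∈ S, rpowSeries (d i) e (σ i) x) z =
      ∑ i ∈ S, rpowSeries (fun m => d i m * ∏ l ∈ Finset.range j, (e * m + σ i - l))
        e (σ i - j) z := by
  induction j generalizing z with
  | zero => simp
  | succ j ih =>
    have hev : iteratedDeriv j (fun x => ∑ i ∈ S, rpowSeries (d i) e (σ i) x) =ᶠ[nhds z]
        fun x => ∑ i ∈ S, rpowSeries (fun m => d i m * ∏ l ∈ Finset.range j, (e * m + σ i - l))
          e (σ i - j) x :=
      Filter.eventually_of_mem (isOpen_Ioi.mem_nhds hz) fun x hx => ih hx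
    rw [iteratedDeriv_succ, hev.deriv_eq,
      (hasDerivAt_sum_rpowSeries S _ (fun i hi => (hd i hi).mul_prod e (σ i) j) he hz).deriv]
    refine Finset.sum_congr rfl fun i _ => ?_
    simp only [Finset.prod_range_succ, Nat.cast_succ, rpowSeries]
    exact tsum_congr fun m => by ring_nf

lemma add_mul_deriv_sum_rpowSeries (hd : ∀ i ∈ S, EntireCoeffs (d i)) (he : 0 < e) (a b : ℝ)
    {f : ℝ → ℝ} (hf : ∀ x, 0 < x → f x = ∑ i ∈ S, rpowSeries (d i) e (σ i) x) {z : ℝ}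
    (hz : 0 < z) :
    a * f z + b * z * deriv f z =
      ∑ i ∈ S, rpowSeries (fun m => (a + b * (e * m + σ i)) * d i m) e (σ i) z := by
  have hev : f =ᶠ[nhds z] fun x => ∑ i ∈ S, rpowSeries (d i) e (σ i) x :=
    Filter.eventually_of_mem (isOpen_Ioi.mem_nhds hz) hf
  rw [hev.deriv_eq, (hasDerivAt_sum_rpowSeries S σ hd he hz).deriv, hf z hz, Finset.mul_sum,
    Finset.mul_sum, ← Finset.sum_add_distrib]
  refine Finset.sum_congr rfl fun i hi => ?_
  have hz_series : z * rpowSeries (fun m => d i m * (e * m + σ i)) e (σ i - 1) z =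
      rpowSeries (fun m => d i m * (e * m + σ i)) e (σ i) z := by
    rw [rpowSeries_const_mul]
    refine tsum_congr fun m => ?_
    rw [show e * m + σ i = e * m + (σ i - 1) + 1 by ring, Real.rpow_add_one hz.ne']
    ring_nf
  rw [mul_assoc, hz_series, rpowSeries_const_mul, rpowSeries_const_mul,
    rpowSeries_add ((hd i hi).const_mul a) (((hd i hi).mul_affine e (σ i)).const_mul b) e _ hz]
  exact tsum_congr fun m => by ring

end FiniteSums

lemma intervalIntegrable_sub_rpow_mul_rpow {c μ x : ℝ} (hc : 0 < c) (hμ : -1 < μ) (hx : 0 < x) :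
    IntervalIntegrable (fun s => (x - s) ^ (c - 1) * s ^ μ) volume 0 x := by
  set M := (x / 2) ^ (c - 1) + x ^ (c - 1)
  set M' := (x / 2) ^ μ + x ^ μ
  have hkernel : IntervalIntegrable (fun s => (x - s) ^ (c - 1)) volume 0 x := by
    simpa using ((intervalIntegral.intervalIntegrable_rpow' (a := 0) (b := x)
      (by linarith : -1 < c - 1)).comp_sub_left x).symm
  refine IntervalIntegrable.mono_fun'
    (((intervalIntegral.intervalIntegrable_rpow' hμ).const_mul M).add (hkernel.const_mul M'))
    (by fun_prop) ?_
  rw [Set.uIoc_of_le hx.le]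
  refine (ae_restrict_iff' measurableSet_Ioc).2 (.of_forall fun s ⟨hs₀, hsx⟩ => ?_)
  have hk := Real.rpow_nonneg (by linarith : 0 ≤ x - s) (c - 1)
  have hp := Real.rpow_nonneg hs₀.le μ
  dsimp only
  rw [Real.norm_of_nonneg (by positivity)]
  rcases le_total s (x / 2) with hs | hs
  · have := rpow_le_add_rpow (by linarith : 0 < x / 2) (by linarith : x / 2 ≤ x - s)
      (by linarith : x - s ≤ x) (c - 1)
    nlinarith [mul_nonneg (Real.rpow_nonneg (by linarith : (0 : ℝ) ≤ x / 2) μ) hk,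
      mul_nonneg (Real.rpow_nonneg hx.le μ) hk]
  · have := rpow_le_add_rpow (by linarith : 0 < x / 2) hs hsx μ
    nlinarith [mul_nonneg (Real.rpow_nonneg (by linarith : (0 : ℝ) ≤ x / 2) (c - 1)) hp,
      mul_nonneg (Real.rpow_nonneg hx.le (c - 1)) hp]

lemma integral_sub_rpow_mul_rpow {c μ x : ℝ} (hc : 0 < c) (hμ : -1 < μ) (hx : 0 < x) :
    ∫ s in (0 : ℝ)..x, (x - s) ^ (c - 1) * s ^ μ =
      Gamma c * (Gamma (μ + 1) / Gamma (μ + c + 1)) * x ^ (μ + c) := by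
  have hμc : 0 < μ + c + 1 := by linarith
  have hbeta := Complex.Gamma_mul_Gamma_eq_betaIntegral (s := (μ + 1 : ℝ)) (t := c)
    (by simpa using (by linarith : 0 < μ + 1)) (by simpa using hc)
  have hscaled := Complex.betaIntegral_scaled (μ + 1 : ℝ) c hx
  have hint : ((∫ s in (0 : ℝ)..x, (x - s) ^ (c - 1) * s ^ μ : ℝ) : ℂ) =
      ∫ s in (0 : ℝ)..x, (s : ℂ) ^ (((μ + 1 : ℝ) : ℂ) - 1) * ((x : ℂ) - s) ^ ((c : ℂ) - 1) := by
    rw [← intervalIntegral.integral_ofReal]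
    refine intervalIntegral.integral_congr fun s hs => ?_
    rw [Set.uIcc_of_le hx.le] at hs
    rw [Complex.ofReal_mul, Complex.ofReal_cpow (by linarith [hs.2]),
      Complex.ofReal_cpow hs.1]
    push_cast
    ring_nf
  have hΓ : (Gamma (μ + c + 1) : ℂ) ≠ 0 := by
    exact_mod_cast (Real.Gamma_pos_of_pos hμc).ne'
  rw [hscaled, show (((μ + 1 : ℝ) : ℂ) + c - 1) = ((μ + c : ℝ) : ℂ) by push_cast; ring,
    ← Complex.ofReal_cpow hx.le] at hint
  have hsum : ((μ + 1 : ℝ) : ℂ) + c = ((μ + c + 1 : ℝ) : ℂ) := by push_cast; ring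
  rw [hsum, Complex.Gamma_ofReal, Complex.Gamma_ofReal, Complex.Gamma_ofReal] at hbeta
  apply Complex.ofReal_injective
  rw [hint, Complex.ofReal_mul, Complex.ofReal_mul, Complex.ofReal_div]
  field_simp
  linear_combination -((x ^ (μ + c) : ℝ) : ℂ) * hbeta

lemma abs_rpowSeries_le {d : ℕ → ℝ} (h : EntireCoeffs d) {e : ℝ} (he : 0 ≤ e) (σ : ℝ)
    {s x : ℝ} (hs : 0 < s) (hsx : s ≤ x) :
    |rpowSeries d e σ s| ≤ (∑' m, |d m| * (x ^ e) ^ m) * s ^ σ := by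
  have hsum : ∀ y : ℝ, 0 < y → Summable fun m => |d m| * (y ^ e) ^ m := fun y hy => by
    simpa using h 0 (y ^ e) (by positivity)
  have hterm : ∀ m : ℕ, ‖d m * (s ^ σ * (s ^ e) ^ m)‖ = |d m| * (s ^ e) ^ m * s ^ σ := fun m => by
    rw [Real.norm_eq_abs, abs_mul, abs_of_nonneg (by positivity : 0 ≤ s ^ σ * (s ^ e) ^ m)]
    ring
  simp only [rpowSeries, rpow_mul_add hs]
  calc |∑' m, d m * (s ^ σ * (s ^ e) ^ m)|
      ≤ ∑' m, |d m| * (s ^ e) ^ m * s ^ σ :=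
        (norm_tsum_le_tsum_norm (((hsum s hs).mul_right (s ^ σ)).congr fun m =>
          (hterm m).symm)).trans_eq (tsum_congr hterm)
    _ ≤ ∑' m, |d m| * (x ^ e) ^ m * s ^ σ := by
        refine ((hsum s hs).mul_right _).tsum_le_tsum (fun m => ?_)
          ((hsum x (hs.trans_le hsx)).mul_right _)
        gcongr
    _ = (∑' m, |d m| * (x ^ e) ^ m) * s ^ σ := tsum_mul_right

lemma continuousOn_rpowSeries {d : ℕ → ℝ} (h : EntireCoeffs d) {e : ℝ} (he : 0 < e) (σ : ℝ) :
    ContinuousOn (rpowSeries d e σ) (Set.Ioi 0) := fun _ hz =>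
  (hasDerivAt_rpowSeries h he σ hz).continuousAt.continuousWithinAt

section KernelIntegrals

variable {d : ℕ → ℝ} {e σ c x : ℝ}

lemma intervalIntegrable_kernel_mul_rpowSeries (h : EntireCoeffs d) (he : 0 < e) (hσ : -1 < σ)
    (hc : 0 < c) (hx : 0 < x) :
    IntervalIntegrable (fun s => (x - s) ^ (c - 1) * rpowSeries d e σ s) volume 0 x := by
  set K := ∑' m, |d m| * (x ^ e) ^ m
  refine IntervalIntegrable.mono_fun'
    ((intervalIntegrable_sub_rpow_mul_rpow hc hσ hx).const_mul K) ?_ ?_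
  · rw [Set.uIoc_of_le hx.le]
    exact (by fun_prop : Measurable fun s : ℝ => (x - s) ^ (c - 1)).aestronglyMeasurable.mul
      ((continuousOn_rpowSeries h he σ).aestronglyMeasurable measurableSet_Ioi |>.mono_set
        Set.Ioc_subset_Ioi_self)
  rw [Set.uIoc_of_le hx.le]
  refine (ae_restrict_iff' measurableSet_Ioc).2 (.of_forall fun s ⟨hs₀, hsx⟩ => ?_)
  have hk := Real.rpow_nonneg (by linarith : 0 ≤ x - s) (c - 1)
  dsimp only
  rw [Real.norm_eq_abs, abs_mul, abs_of_nonneg hk]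
  calc (x - s) ^ (c - 1) * |rpowSeries d e σ s| ≤ (x - s) ^ (c - 1) * (K * s ^ σ) := by
        gcongr; exact abs_rpowSeries_le h he.le σ hs₀ hsx
    _ = K * ((x - s) ^ (c - 1) * s ^ σ) := by ring

lemma integral_kernel_mul_rpow (a : ℝ) {μ : ℝ} (hμ : -1 < μ) (hc : 0 < c) (hx : 0 < x) :
    ∫ s in Set.Ioc 0 x, (x - s) ^ (c - 1) * (a * s ^ μ) =
      a * (Gamma c * (Gamma (μ + 1) / Gamma (μ + c + 1)) * x ^ (μ + c)) := by
  rw [← intervalIntegral.integral_of_le hx.le, ← integral_sub_rpow_mul_rpow hc hμ hx,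
    ← intervalIntegral.integral_const_mul]
  exact intervalIntegral.integral_congr fun s _ => by ring

lemma integral_kernel_mul_rpowSeries (h : EntireCoeffs d) (he : 0 < e) (hσ : -1 < σ)
    (hc : 0 < c) (hx : 0 < x) :
    ∫ s in (0 : ℝ)..x, (x - s) ^ (c - 1) * rpowSeries d e σ s =
      Gamma c * rpowSeries (fun m => d m * (Gamma (e * m + σ + 1) / Gamma (e * m + σ + c + 1)))
        e (σ + c) x := by
  set F : ℕ → ℝ → ℝ := fun m s => (x - s) ^ (c - 1) * (d m * s ^ (e * m + σ))
  have hμ : ∀ m : ℕ, -1 < e * m + σ := fun m => by linarith [show (0 : ℝ) ≤ e * m by positivity]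
  have hF_int : ∀ m, Integrable (F m) (volume.restrict (Set.Ioc 0 x)) := fun m => by
    have := ((intervalIntegrable_sub_rpow_mul_rpow hc (hμ m) hx).const_mul (d m)).1
    exact this.congr (.of_forall fun s => by simp only [F]; ring)
  have hF_norm : ∀ m, ∫ s in Set.Ioc 0 x, ‖F m s‖ =
      |d m| * (Gamma c * (Gamma (e * m + σ + 1) / Gamma (e * m + σ + c + 1)) *
        x ^ (e * m + σ + c)) := fun m => by
    rw [← integral_kernel_mul_rpow _ (hμ m) hc hx]
    refine setIntegral_congr_fun measurableSet_Ioc fun s ⟨hs₀, hsx⟩ => ?_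
    simp only [F, Real.norm_eq_abs, abs_mul, abs_of_nonneg (Real.rpow_nonneg hs₀.le _),
      abs_of_nonneg (Real.rpow_nonneg (by linarith : 0 ≤ x - s) (c - 1))]
  have hF_sum : Summable fun m => ∫ s in Set.Ioc 0 x, ‖F m s‖ := by
    simp only [hF_norm]
    refine ((((h.mul_Gamma_div he hc.le σ).abs).summable_rpowSeries e (σ + c) hx).mul_left
      (Gamma c)).congr fun m => ?_
    rw [show e * m + σ + c = e * m + (σ + c) by ring, abs_mul,
      abs_of_nonneg (div_nonneg (Real.Gamma_nonneg_of_nonneg (by linarith [hμ m]))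
        (Real.Gamma_nonneg_of_nonneg (by linarith [hμ m])))]
    ring
  rw [intervalIntegral.integral_of_le hx.le]
  calc ∫ s in Set.Ioc 0 x, (x - s) ^ (c - 1) * rpowSeries d e σ s
      = ∫ s in Set.Ioc 0 x, ∑' m, F m s := by
        simp only [F, rpowSeries, tsum_mul_left]
    _ = ∑' m, ∫ s in Set.Ioc 0 x, F m s :=
        (integral_tsum_of_summable_integral_norm hF_int hF_sum).symm
    _ = _ := by
        rw [rpowSeries_const_mul]
        refine tsum_congr fun m => ?_
        dsimp only
        rw [integral_kernel_mul_rpow _ (hμ m) hc hx, show e * m + σ + c = e * m + (σ + c) by ring]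
        ring

end KernelIntegrals

lemma prod_range_sub_div_Gamma (V : ℝ) (n : ℕ) :
    (∏ l ∈ Finset.range n, (V - l)) / Gamma (V + 1) = (Gamma (V + 1 - n))⁻¹ := by
  induction n with
  | zero => simp
  | succ n ih =>
    rw [Finset.prod_range_succ, mul_div_right_comm, ih, Nat.cast_succ,
      show V + 1 - (n + 1) = V - n by ring]
    rcases eq_or_ne (V - n) 0 with h | h
    · simp [h]
    · rw [show V + 1 - n = V - n + 1 by ring, Real.Gamma_add_one h, mul_inv, mul_comm (V - n)⁻¹,
        mul_assoc, inv_mul_cancel₀ h, mul_one]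

/-- Mathlib's `Γ` vanishes at its poles, so the coefficient `Γ(μ + 1) / Γ(μ + 1 - α)` of
`D^α x^μ` is `0` when `μ + 1 - α` is a nonpositive integer. -/
lemma rlDeriv_sum_rpowSeries {ι : Type*} (S : Finset ι) {d : ι → ℕ → ℝ} {σ : ι → ℝ} {α e : ℝ}
    (hα : α < ⌈α⌉₊) (he : 0 < e) (hd : ∀ i ∈ S, EntireCoeffs (d i)) (hσ : ∀ i ∈ S, -1 < σ i)
    {f : ℝ → ℝ} (hf : ∀ x, 0 < x → f x = ∑ i ∈ S, rpowSeries (d i) e (σ i) x) {z : ℝ}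
    (hz : 0 < z) :
    rlDeriv α f z = ∑ i ∈ S, rpowSeries
      (fun m => d i m * (Gamma (e * m + σ i + 1) / Gamma (e * m + σ i + 1 - α))) e (σ i - α) z := by
  set n := ⌈α⌉₊
  set c := (n : ℝ) - α
  have hc : 0 < c := sub_pos.2 hα
  set d' : ι → ℕ → ℝ := fun i m => Gamma c * (d i m * (Gamma (e * m + σ i + 1) /
    Gamma (e * m + σ i + c + 1)))
  have hd' : ∀ i ∈ S, EntireCoeffs (d' i) := fun i hi =>
    ((hd i hi).mul_Gamma_div he hc.le (σ i)).const_mul _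
  have hI : ∀ x, 0 < x → ∫ s in (0 : ℝ)..x, (x - s) ^ (c - 1) * f s =
      ∑ i ∈ S, rpowSeries (d' i) e (σ i + c) x := fun x hx => by
    rw [intervalIntegral.integral_congr_ae (g := fun s => ∑ i ∈ S, (x - s) ^ (c - 1) *
        rpowSeries (d i) e (σ i) s) (.of_forall fun s hs => by
          rw [Set.uIoc_of_le hx.le] at hs; rw [hf s hs.1, Finset.mul_sum]),
      intervalIntegral.integral_finsetSum fun i hi =>
        intervalIntegrable_kernel_mul_rpowSeries (hd i hi) he (hσ i hi) hc hx]
    exact Finset.sum_congr rfl fun i hi => by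
      rw [integral_kernel_mul_rpowSeries (hd i hi) he (hσ i hi) hc hx, rpowSeries_const_mul]
  have hev : (fun x => ∫ s in (0 : ℝ)..x, (x - s) ^ (c - 1) * f s) =ᶠ[nhds z]
      fun x => ∑ i ∈ S, rpowSeries (d' i) e (σ i + c) x :=
    Filter.eventually_of_mem (isOpen_Ioi.mem_nhds hz) hI
  rw [rlDeriv, hev.iteratedDeriv_eq, iteratedDeriv_sum_rpowSeries S _ hd' he n hz, Finset.mul_sum]
  refine Finset.sum_congr rfl fun i hi => ?_
  rw [rpowSeries_const_mul, show σ i + c - n = σ i - α by ring]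
  refine tsum_congr fun m => ?_
  have hΓc := (Real.Gamma_pos_of_pos hc).ne'
  have hpoch := prod_range_sub_div_Gamma (e * m + σ i + c) n
  rw [show e * m + σ i + c + 1 - n = e * m + σ i + 1 - α by ring] at hpoch
  dsimp only [d']
  rw [div_eq_mul_inv (Gamma (e * m + σ i + 1)) (Gamma (e * m + σ i + 1 - α)), ← hpoch]
  simp only [show ∀ l : ℕ, e * m + (σ i + c) - l = e * m + σ i + c - l by
    intro l; ring, show Gamma ((⌈α⌉₊ : ℝ) - α) = Gamma c from rfl]
  field_simp

lemma mul_rpow_mul_genWright (c A₁ A₂ B e C β : ℝ) {x : ℝ} (hx : 0 < x) :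
    c * x ^ β * genWright ![A₁, A₂, 1] ![1, 1, 1] ![B] ![e] (C * x ^ e) =
      rpowSeries (fun m => c * wrightCoeff A₁ A₂ B e C m) e β x := by
  rw [mul_assoc, rpow_mul_genWright _ _ _ _ _ _ hx, rpowSeries_const_mul]

lemma genWright_swap (A₁ A₂ : ℝ) (B b : Fin 1 → ℝ) (x : ℝ) :
    genWright ![A₁, A₂, 1] ![1, 1, 1] B b x = genWright ![A₂, A₁, 1] ![1, 1, 1] B b x := by
  refine tsum_congr fun m => ?_
  simp only [Fin.prod_univ_three, Matrix.cons_val_zero, Matrix.cons_val_one,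
    Matrix.cons_val_two, Matrix.tail_cons, Matrix.head_cons]
  ring

section Terms

variable {α st₁ st₂ a₁ b₁ b₂ c z : ℝ} {k : ℕ}

/-- The `D^α` of a `c₁`-term of `φ` against the matching term of `ψ`: the `m = 0` coefficient
is killed by the pole of `Γ` at `1 - k`, and the index shift turns `z^(-k)` into `z^(2α - k)`. -/
lemma rpowSeries_c₁_term (hα : 1 < α) (hk : 1 ≤ k) (hkα : (k : ℝ) < α + 1)
    (ha₁ : a₁ = -st₁ * b₁) (hA : ∀ j : ℕ, 1 - k / (2 * α) - st₁ / 2 + j ≠ 0) (hz : 0 < z) :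
    rpowSeries (fun m => c * wrightCoeff (1 - k / (2 * α) - st₁ / 2) (1 / 2 - k / (2 * α) - st₂ / 2)
        (1 + α - k) (2 * α) (4 * b₁ * b₂) m *
          (Gamma (2 * α * m + (α - k) + 1) / Gamma (2 * α * m + (α - k) + 1 - α)))
        (2 * α) (α - k - α) z =
      rpowSeries (fun m => (a₁ + b₁ / α * (2 * α * m + (2 * α - k))) *
        (2 * b₂ * (c * wrightCoeff (1 - k / (2 * α) - st₁ / 2) (3 / 2 - k / (2 * α) - st₂ / 2)
          (1 + 2 * α - k) (2 * α) (4 * b₁ * b₂) m))) (2 * α) (2 * α - k) z := by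
  set A₁ := 1 - k / (2 * α) - st₁ / 2
  set A₂ := 1 / 2 - k / (2 * α) - st₂ / 2
  set C := 4 * b₁ * b₂
  have hw := (entireCoeffs_wrightCoeff A₁ A₂ (1 - k) C (by linarith : 2 < 2 * α)).const_mul c
  have hpole : Gamma (1 - k) = 0 := by
    rw [show (1 : ℝ) - k = -((k - 1 : ℕ) : ℝ) by push_cast [Nat.cast_sub hk]; ring]
    exact Real.Gamma_neg_nat_eq_zero _
  calc _ = rpowSeries (fun m => c * wrightCoeff A₁ A₂ (1 - k) (2 * α) C m) (2 * α) (-k) z := by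
        refine rpowSeries_congr (fun m => ?_) (by ring)
        rw [mul_assoc, wrightCoeff_mul_Gamma_div _ _ _ _ _ (by ring) (Real.Gamma_pos_of_pos
          (by linarith [show (0 : ℝ) ≤ 2 * α * m by positivity])).ne',
          show 1 + α - k - α = 1 - k by ring]
    _ = rpowSeries (fun m => c * wrightCoeff A₁ A₂ (1 - k) (2 * α) C (m + 1))
          (2 * α) (-k + 2 * α) z :=
        rpowSeries_eq_shift hw (by simp [wrightCoeff_zero_of_Gamma_eq_zero hpole]) _ _ hz
    _ = _ := by
        refine rpowSeries_congr (fun m => ?_) (by ring)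
        rw [wrightCoeff_succ, wrightCoeff_add_one_left (hA m),
          show A₂ + 1 = 3 / 2 - k / (2 * α) - st₂ / 2 by ring,
          show 1 - (k : ℝ) + 2 * α = 1 + 2 * α - k by ring]
        simp only [A₁, C, ha₁]
        field_simp
        ring

lemma rpowSeries_c₂_term (hα : 1 < α) (hkα : (k : ℝ) < α + 1) (ha₁ : a₁ = -st₁ * b₁)
    (hA : ∀ m : ℕ, 1 / 2 - k / (2 * α) - st₁ / 2 + m ≠ 0) :
    rpowSeries (fun m => 2 * b₁ * (c * wrightCoeff (3 / 2 - k / (2 * α) - st₁ / 2)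
        (1 - k / (2 * α) - st₂ / 2) (1 + 2 * α - k) (2 * α) (4 * b₁ * b₂) m) *
          (Gamma (2 * α * m + (2 * α - k) + 1) / Gamma (2 * α * m + (2 * α - k) + 1 - α)))
        (2 * α) (2 * α - k - α) z =
      rpowSeries (fun m => (a₁ + b₁ / α * (2 * α * m + (α - k))) *
        (c * wrightCoeff (1 / 2 - k / (2 * α) - st₁ / 2) (1 - k / (2 * α) - st₂ / 2)
          (1 + α - k) (2 * α) (4 * b₁ * b₂) m)) (2 * α) (α - k) z := by
  refine rpowSeries_congr (fun m => ?_) (by ring)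
  rw [mul_assoc (2 * b₁), mul_assoc c, wrightCoeff_mul_Gamma_div _ _ _ _ _ (by ring)
      (Real.Gamma_pos_of_pos (by linarith [show (0 : ℝ) ≤ 2 * α * m by positivity])).ne',
    show 1 + 2 * α - k - α = 1 + α - k by ring,
    show 3 / 2 - k / (2 * α) - st₁ / 2 = 1 / 2 - k / (2 * α) - st₁ / 2 + 1 by ring,
    wrightCoeff_add_one_left (hA m), ha₁]
  field_simp
  ring

end Terms

section WrightSystem

variable (α st₁ st₂ b₁ b₂ : ℝ) (c₁ c₂ : ℕ → ℝ)

noncomputable def wrightPhi : ℝ → ℝ := fun x =>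
  (∑ k ∈ Finset.Icc 1 ⌈α⌉₊, c₁ k * x ^ (α - (k : ℝ)) *
    genWright ![1 - (k : ℝ) / (2 * α) - st₁ / 2,
                1 / 2 - (k : ℝ) / (2 * α) - st₂ / 2, 1] ![1, 1, 1]
      ![1 + α - (k : ℝ)] ![2 * α] (4 * b₁ * b₂ * x ^ (2 * α)))
  + 2 * b₁ * ∑ k ∈ Finset.Icc 1 ⌈α⌉₊, c₂ k * x ^ (2 * α - (k : ℝ)) *
    genWright ![3 / 2 - (k : ℝ) / (2 * α) - st₁ / 2,
                1 - (k : ℝ) / (2 * α) - st₂ / 2, 1] ![1, 1, 1]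
      ![1 + 2 * α - (k : ℝ)] ![2 * α] (4 * b₁ * b₂ * x ^ (2 * α))

noncomputable def wrightPsi : ℝ → ℝ := fun x =>
  2 * b₂ * (∑ k ∈ Finset.Icc 1 ⌈α⌉₊, c₁ k * x ^ (2 * α - (k : ℝ)) *
    genWright ![1 - (k : ℝ) / (2 * α) - st₁ / 2,
                3 / 2 - (k : ℝ) / (2 * α) - st₂ / 2, 1] ![1, 1, 1]
      ![1 + 2 * α - (k : ℝ)] ![2 * α] (4 * b₁ * b₂ * x ^ (2 * α)))
  + ∑ k ∈ Finset.Icc 1 ⌈α⌉₊, c₂ k * x ^ (α - (k : ℝ)) *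
    genWright ![1 / 2 - (k : ℝ) / (2 * α) - st₁ / 2,
                1 - (k : ℝ) / (2 * α) - st₂ / 2, 1] ![1, 1, 1]
      ![1 + α - (k : ℝ)] ![2 * α] (4 * b₁ * b₂ * x ^ (2 * α))

lemma wrightPsi_eq_wrightPhi_swap :
    wrightPsi α st₁ st₂ b₁ b₂ c₁ c₂ = wrightPhi α st₂ st₁ b₂ b₁ c₂ c₁ := by
  funext x
  simp only [wrightPsi, wrightPhi, mul_comm (4 * b₂) b₁, mul_right_comm 4 b₁ b₂]
  rw [add_comm]
  simp only [genWright_swap (_ - _ - st₁ / 2)]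

lemma wrightPhi_eq_sum_rpowSeries {x : ℝ} (hx : 0 < x) :
    wrightPhi α st₁ st₂ b₁ b₂ c₁ c₂ x =
      ∑ i ∈ (Finset.Icc 1 ⌈α⌉₊).disjSum (Finset.Icc 1 ⌈α⌉₊), rpowSeries
        (Sum.elim (fun k m => c₁ k * wrightCoeff (1 - k / (2 * α) - st₁ / 2)
            (1 / 2 - k / (2 * α) - st₂ / 2) (1 + α - k) (2 * α) (4 * b₁ * b₂) m)
          (fun k m => 2 * b₁ * (c₂ k * wrightCoeff (3 / 2 - k / (2 * α) - st₁ / 2)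
            (1 - k / (2 * α) - st₂ / 2) (1 + 2 * α - k) (2 * α) (4 * b₁ * b₂) m)) i)
        (2 * α) (Sum.elim (fun k : ℕ => α - k) (fun k : ℕ => 2 * α - k) i) x := by
  simp only [wrightPhi, Finset.sum_disjSum, Sum.elim_inl, Sum.elim_inr, Finset.mul_sum,
    mul_rpow_mul_genWright _ _ _ _ _ _ _ hx, rpowSeries_const_mul]

lemma wrightPsi_eq_sum_rpowSeries {x : ℝ} (hx : 0 < x) :
    wrightPsi α st₁ st₂ b₁ b₂ c₁ c₂ x =
      ∑ i ∈ (Finset.Icc 1 ⌈α⌉₊).disjSum (Finset.Icc 1 ⌈α⌉₊), rpowSeries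
        (Sum.elim (fun k m => 2 * b₂ * (c₁ k * wrightCoeff (1 - k / (2 * α) - st₁ / 2)
            (3 / 2 - k / (2 * α) - st₂ / 2) (1 + 2 * α - k) (2 * α) (4 * b₁ * b₂) m))
          (fun k m => c₂ k * wrightCoeff (1 / 2 - k / (2 * α) - st₁ / 2)
            (1 - k / (2 * α) - st₂ / 2) (1 + α - k) (2 * α) (4 * b₁ * b₂) m) i)
        (2 * α) (Sum.elim (fun k : ℕ => 2 * α - k) (fun k : ℕ => α - k) i) x := by
  simp only [wrightPsi, Finset.sum_disjSum, Sum.elim_inl, Sum.elim_inr, Finset.mul_sum,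
    mul_rpow_mul_genWright _ _ _ _ _ _ _ hx, rpowSeries_const_mul]

end WrightSystem

theorem rlDeriv_wrightPhi {α st₁ st₂ a₁ b₁ b₂ : ℝ} {c₁ c₂ : ℕ → ℝ} (hα : 1 < α)
    (hαn : α < ⌈α⌉₊) (ha₁ : a₁ = -st₁ * b₁)
    (hst₁ : ∀ k ∈ Finset.Icc 1 ⌈α⌉₊, ∀ j : ℤ, 0 < j → (k : ℝ) / α + st₁ ≠ j) {z : ℝ}
    (hz : 0 < z) :
    rlDeriv α (wrightPhi α st₁ st₂ b₁ b₂ c₁ c₂) z =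
      a₁ * wrightPsi α st₁ st₂ b₁ b₂ c₁ c₂ z +
        b₁ / α * z * deriv (wrightPsi α st₁ st₂ b₁ b₂ c₁ c₂) z := by
  set K := Finset.Icc 1 ⌈α⌉₊
  have hK : ∀ k ∈ K, 1 ≤ k ∧ (k : ℝ) < α + 1 := fun k hk => by
    obtain ⟨hk₁, hk₂⟩ := Finset.mem_Icc.1 hk
    exact ⟨hk₁, (Nat.cast_le.2 hk₂).trans_lt (Nat.ceil_lt_add_one (by linarith))⟩
  have hA : ∀ k ∈ K, ∀ j : ℕ, (1 - k / (2 * α) - st₁ / 2 + j ≠ 0) ∧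
      (1 / 2 - k / (2 * α) - st₁ / 2 + j ≠ 0) := fun k hk j => by
    have hk2 : (k : ℝ) / α = 2 * (k / (2 * α)) := by field_simp
    refine ⟨fun h => hst₁ k hk (2 * j + 2) (by positivity) ?_,
      fun h => hst₁ k hk (2 * j + 1) (by positivity) ?_⟩ <;> push_cast <;> linarith
  have he : 2 < 2 * α := by linarith
  rw [rlDeriv_sum_rpowSeries _ hαn (by linarith) ?_ ?_
      (fun x hx => wrightPhi_eq_sum_rpowSeries α st₁ st₂ b₁ b₂ c₁ c₂ hx) hz,
    add_mul_deriv_sum_rpowSeries _ _ ?_ (by linarith) _ _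
      (fun x hx => wrightPsi_eq_sum_rpowSeries α st₁ st₂ b₁ b₂ c₁ c₂ hx) hz,
    Finset.sum_disjSum, Finset.sum_disjSum]
  · congr 1 <;> refine Finset.sum_congr rfl fun k hk => ?_
    · exact rpowSeries_c₁_term hα (hK k hk).1 (hK k hk).2 ha₁ (fun j => (hA k hk j).1) hz
    · exact rpowSeries_c₂_term hα (hK k hk).2 ha₁ (fun j => (hA k hk j).2)
  · rintro (k | k) -
    · exact ((entireCoeffs_wrightCoeff _ _ _ _ he).const_mul _).const_mul _
    · exact (entireCoeffs_wrightCoeff _ _ _ _ he).const_mul _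
  · rintro (k | k) -
    · exact (entireCoeffs_wrightCoeff _ _ _ _ he).const_mul _
    · exact ((entireCoeffs_wrightCoeff _ _ _ _ he).const_mul _).const_mul _
  · rintro (k | k) hk <;> simp only [Finset.inl_mem_disjSum, Finset.inr_mem_disjSum] at hk <;>
      dsimp only [Sum.elim_inl, Sum.elim_inr] <;> linarith [(hK k hk).2]

/-- generalized-Wright solution of the system
`D^α φ = a₁ ψ + (b₁/α) z ψ'`, `D^α ψ = a₂ φ + (b₂/α) z φ'` for non-integer
`α > 1` (Proposition 3.2(3)). -/
theorem statement8 (α : ℝ) (hα : 1 < α) (hαni : ∀ k : ℤ, α ≠ (k : ℝ))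
    (a₁ a₂ b₁ b₂ : ℝ) (hb : b₁ * b₂ ≠ 0) (st₁ st₂ : ℝ)
    (hst₁ : st₁ = -a₁ / b₁) (hst₂ : st₂ = -a₂ / b₂)
    (hpos : ∀ k ∈ Finset.Icc 1 ⌈α⌉₊, ∀ j : ℤ, 0 < j →
      (k : ℝ) / α + st₁ ≠ (j : ℝ) ∧ (k : ℝ) / α + st₂ ≠ (j : ℝ))
    (c₁ c₂ : ℕ → ℝ) (φ ψ : ℝ → ℝ)
    (hφ : φ = fun x =>
      (∑ k ∈ Finset.Icc 1 ⌈α⌉₊, c₁ k * x ^ (α - (k : ℝ)) *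
        genWright ![1 - (k : ℝ) / (2 * α) - st₁ / 2,
                    1 / 2 - (k : ℝ) / (2 * α) - st₂ / 2, 1] ![1, 1, 1]
          ![1 + α - (k : ℝ)] ![2 * α] (4 * b₁ * b₂ * x ^ (2 * α)))
      + 2 * b₁ * ∑ k ∈ Finset.Icc 1 ⌈α⌉₊, c₂ k * x ^ (2 * α - (k : ℝ)) *
        genWright ![3 / 2 - (k : ℝ) / (2 * α) - st₁ / 2,
                    1 - (k : ℝ) / (2 * α) - st₂ / 2, 1] ![1, 1, 1]
          ![1 + 2 * α - (k : ℝ)] ![2 * α] (4 * b₁ * b₂ * x ^ (2 * α)))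
    (hψ : ψ = fun x =>
      2 * b₂ * (∑ k ∈ Finset.Icc 1 ⌈α⌉₊, c₁ k * x ^ (2 * α - (k : ℝ)) *
        genWright ![1 - (k : ℝ) / (2 * α) - st₁ / 2,
                    3 / 2 - (k : ℝ) / (2 * α) - st₂ / 2, 1] ![1, 1, 1]
          ![1 + 2 * α - (k : ℝ)] ![2 * α] (4 * b₁ * b₂ * x ^ (2 * α)))
      + ∑ k ∈ Finset.Icc 1 ⌈α⌉₊, c₂ k * x ^ (α - (k : ℝ)) *
        genWright ![1 / 2 - (k : ℝ) / (2 * α) - st₁ / 2,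
                    1 - (k : ℝ) / (2 * α) - st₂ / 2, 1] ![1, 1, 1]
          ![1 + α - (k : ℝ)] ![2 * α] (4 * b₁ * b₂ * x ^ (2 * α))) :
    ∀ z : ℝ, 0 < z →
      rlDeriv α φ z = a₁ * ψ z + (b₁ / α) * z * deriv ψ z ∧
      rlDeriv α ψ z = a₂ * φ z + (b₂ / α) * z * deriv φ z := by
  obtain ⟨hb₁, hb₂⟩ := mul_ne_zero_iff.1 hb
  have hαn : α < ⌈α⌉₊ := (Nat.le_ceil α).lt_of_ne fun h => hαni ⌈α⌉₊ (by exact_mod_cast h)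
  have ha₁ : a₁ = -st₁ * b₁ := by rw [hst₁]; field_simp
  have ha₂ : a₂ = -st₂ * b₂ := by rw [hst₂]; field_simp
  subst hφ hψ
  intro z hz
  refine ⟨rlDeriv_wrightPhi hα hαn ha₁ (fun k hk j hj => (hpos k hk j hj).1) hz, ?_⟩
  have h := rlDeriv_wrightPhi (st₂ := st₁) (b₂ := b₁) (c₁ := c₂) (c₂ := c₁) hα hαn ha₂
    (fun k hk j hj => (hpos k hk j hj).2) hz
  rwa [← wrightPsi_eq_wrightPhi_swap, wrightPsi_eq_wrightPhi_swap α st₂ st₁ b₂ b₁ c₂ c₁] at h
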